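/- arXiv:2407.20355 — 4 statements merged into one kernel-verified Lean document; each statement's English description precedes it below -/
import Mathlib

section
/- Let p be a prime and let H be a subgroup of a finite group G. Then ν_p(H) ≤ ν_p(G). Moreover, ν_p(H) = ν_p(G) if and only if both of the following hold: (1) every Sylow p-subgroup of H is contained in a unique Sylow p-subgroup of G; and (2) G = H·N_G(P) for every Sylow p-subgroup P of G (where N_G(P) is the normalizer of P in G and H·N_G(P) is the set of products). -/
/-!
Every Sylow `p`-subgroup `Q` of `H` is `P ∩ H` for some Sylow `p`-subgroup `P` of `G`, and by
maximality of `Q` every Sylow `P ⊇ Q` satisfies `P ∩ H = Q`. Choosing such a `P` for each `Q`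
gives an injection `Syl_p(H) → Syl_p(G)`, so the counts agree iff it is onto. It is onto iff
each `Q` lies in a single `P` (then the choice is `H`-equivariant and its image is one
`H`-orbit) and `H` acts transitively on `Syl_p(G)`. As `N_G(P)` is the stabilizer of `P` and `G`
is transitive on `Syl_p(G)`, transitivity of `H` amounts to `G = H N_G(P)`.
-/

open Pointwise MulAction

theorem MulAction.isPretransitive_subgroup_iff_mul_stabilizer_eq_univ {G α : Type*} [Group G]
    [MulAction G α] [IsPretransitive G α] (H : Subgroup G) (a : α) :
    IsPretransitive H α ↔ (H : Set G) * (stabilizer G a : Set G) = Set.univ := by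
  rw [isPretransitive_iff_base a, Set.eq_univ_iff_forall]
  constructor
  · intro hH g
    obtain ⟨h, hh⟩ := hH (g • a)
    refine Set.mem_mul.2 ⟨h, h.2, (h : G)⁻¹ * g, ?_, mul_inv_cancel_left _ _⟩
    rw [SetLike.mem_coe, mem_stabilizer_iff, mul_smul, ← hh, Subgroup.smul_def, inv_smul_smul]
  · intro hH x
    obtain ⟨g, rfl⟩ := exists_smul_eq G a x
    obtain ⟨h, hh, s, hs, rfl⟩ := Set.mem_mul.1 (hH g)
    exact ⟨⟨h, hh⟩, by rw [Subgroup.smul_def, mul_smul, mem_stabilizer_iff.1 hs]⟩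

namespace Sylow

variable {p : ℕ} {G : Type*} [Group G] {H : Subgroup G}

theorem map_subtype_le_iff_comap_subtype_eq {Q : Sylow p H} {P : Sylow p G} :
    (Q : Subgroup H).map H.subtype ≤ P ↔ (P : Subgroup G).comap H.subtype = Q :=
  ⟨fun h ↦ Q.is_maximal' P.isPGroup'.comap_subtype (Subgroup.map_le_iff_le_comap.1 h),
    fun h ↦ h ▸ Subgroup.map_comap_le _ _⟩

theorem comap_subtype_smul (h : H) (P : Sylow p G) :
    ((h • P : Sylow p G) : Subgroup G).comap H.subtype =
      MulAut.conj h • (P : Subgroup G).comap H.subtype := by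
  ext x
  simp [Subgroup.mem_pointwise_smul_iff_inv_smul_mem, Subgroup.smul_def, coe_subgroup_smul,
    Subgroup.mem_subgroupOf]

noncomputable def extend (Q : Sylow p H) : Sylow p G :=
  (Q.exists_comap_subtype_eq).choose

theorem comap_subtype_extend (Q : Sylow p H) :
    (Q.extend : Subgroup G).comap H.subtype = Q :=
  (Q.exists_comap_subtype_eq).choose_spec

theorem extend_injective : Function.Injective (extend : Sylow p H → Sylow p G) :=
  fun Q₁ Q₂ h ↦ Sylow.ext <| by rw [← comap_subtype_extend Q₁, h, comap_subtype_extend]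

theorem extend_smul (hu : ∀ Q : Sylow p H, ∃! P : Sylow p G, (Q : Subgroup H).map H.subtype ≤ P)
    (h : H) (Q : Sylow p H) : (h • Q).extend = h • Q.extend := by
  simp_rw [map_subtype_le_iff_comap_subtype_eq] at hu
  refine (hu (h • Q)).unique (comap_subtype_extend _) ?_
  rw [comap_subtype_smul, comap_subtype_extend, coe_subgroup_smul]

theorem extend_surjective_iff [Fact p.Prime] [Finite (Sylow p G)] :
    Function.Surjective (extend : Sylow p H → Sylow p G) ↔
      (∀ Q : Sylow p H, ∃! P : Sylow p G, (Q : Subgroup H).map H.subtype ≤ P) ∧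
        IsPretransitive H (Sylow p G) := by
  obtain ⟨Q₀⟩ : Nonempty (Sylow p H) := inferInstance
  rw [isPretransitive_iff_base Q₀.extend]
  constructor
  · intro hs
    have hu : ∀ Q : Sylow p H, ∃! P : Sylow p G, (Q : Subgroup H).map H.subtype ≤ P := by
      refine fun Q ↦ ⟨Q.extend, map_subtype_le_iff_comap_subtype_eq.2 (comap_subtype_extend Q), ?_⟩
      intro P hP
      obtain ⟨Q', rfl⟩ := hs P
      rw [map_subtype_le_iff_comap_subtype_eq, comap_subtype_extend] at hP
      rw [Sylow.ext hP]
    refine ⟨hu, fun P ↦ ?_⟩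
    obtain ⟨Q, rfl⟩ := hs P
    obtain ⟨h, rfl⟩ := exists_smul_eq H Q₀ Q
    exact ⟨h, (extend_smul hu h Q₀).symm⟩
  · rintro ⟨hu, htrans⟩ P
    obtain ⟨h, rfl⟩ := htrans P
    exact ⟨h • Q₀, extend_smul hu h Q₀⟩

theorem isPretransitive_subgroup_iff_mul_normalizer_eq_univ [Fact p.Prime] [Finite (Sylow p G)]
    (P : Sylow p G) : IsPretransitive H (Sylow p G) ↔
      (H : Set G) * (Subgroup.normalizer ((P : Subgroup G) : Set G) : Set G) = Set.univ := by
  have hN : Subgroup.normalizer ((P : Subgroup G) : Set G) = stabilizer G P :=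
    (stabilizer_eq_normalizer P).symm
  rw [hN]
  exact isPretransitive_subgroup_iff_mul_stabilizer_eq_univ H P

theorem card_eq_iff_extend_surjective [Finite (Sylow p G)] :
    Nat.card (Sylow p H) = Nat.card (Sylow p G) ↔
      Function.Surjective (extend : Sylow p H → Sylow p G) := by
  rw [← (Nat.bijective_iff_injective_and_card extend).trans (and_iff_right extend_injective),
    Function.Bijective, and_iff_right extend_injective]

end Sylow

/-- for a prime `p` and a subgroup `H` of a finite group `G`, the number of
Sylow `p`-subgroups of `H` is at most that of `G`, with equality if and only if every
Sylow `p`-subgroup of `H` is contained in a unique Sylow `p`-subgroup of `G` and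
`G = H ⬝ N_G(P)` for every Sylow `p`-subgroup `P` of `G`. -/
theorem stmt10 (p : ℕ) (hp : p.Prime) (G : Type) [Group G] [Finite G] (H : Subgroup G) :
    Nat.card (Sylow p H) ≤ Nat.card (Sylow p G) ∧
      (Nat.card (Sylow p H) = Nat.card (Sylow p G) ↔
        (∀ Q : Sylow p H, ∃! P : Sylow p G,
            Subgroup.map H.subtype (Q : Subgroup H) ≤ (P : Subgroup G)) ∧
        (∀ P : Sylow p G,
            (H : Set G) * ((Subgroup.normalizer ((P : Subgroup G) : Set G) : Subgroup G) : Set G) =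
              Set.univ)) := by
  have : Fact p.Prime := ⟨hp⟩
  refine ⟨Nat.card_le_card_of_injective _ Sylow.extend_injective, ?_⟩
  rw [Sylow.card_eq_iff_extend_surjective, Sylow.extend_surjective_iff]
  simp_rw [← Sylow.isPretransitive_subgroup_iff_mul_normalizer_eq_univ, forall_const]
end

section
/- Let p be a prime, let G be a finite group, let H be a maximal subgroup of G containing a Sylow p-subgroup P of G, and let Ω be the set of conjugates of H in G, on which G acts by conjugation. Then ν_p(G) · |{K ∈ Ω : K is fixed by every element of P under conjugation}| = ν_p(H) · |Ω|. (Equivalently, ν_p(H)/ν_p(G) = fpr(P,Ω), the proportion of elements of Ω fixed by all of P.) -/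
/-!
Count the pairs `(Q, K)` with `Q` a Sylow `p`-subgroup of `G`, `K` a conjugate of `H` and
`Q ≤ K`. Conjugation acts transitively on both coordinates and preserves incidence, so the
count is `ν_p(G) · #{K : P ≤ K}` and also `|Ω| · #{Q : Q ≤ H} = |Ω| · ν_p(H)`. Finally,
`P` fixes `K` iff it normalizes `K`, and as `K` contains a Sylow `p`-subgroup of `G`,
Sylow's conjugacy theorem in `N_G(K)` shows that this happens iff `P ≤ K`.
-/

open Pointwise MulAction Subgroup

section DoubleCounting

variable {G X Y : Type*} [Group G] [MulAction G X] [MulAction G Y]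

theorem nonempty_rel_fiber_equiv [IsPretransitive G X] (r : X → Y → Prop)
    (hr : ∀ (g : G) x y, r (g • x) (g • y) ↔ r x y) (x x₀ : X) :
    Nonempty ({y // r x y} ≃ {y // r x₀ y}) := by
  obtain ⟨g, rfl⟩ := exists_smul_eq G x₀ x
  exact ⟨(MulAction.toPerm g).symm.subtypeEquiv fun y => by simp [← hr g x₀ (g⁻¹ • y)]⟩

theorem card_rel_eq_card_mul [IsPretransitive G X] (r : X → Y → Prop)
    (hr : ∀ (g : G) x y, r (g • x) (g • y) ↔ r x y) (x₀ : X) :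
    Nat.card {xy : X × Y // r xy.1 xy.2} = Nat.card X * Nat.card {y // r x₀ y} := by
  have e x : {y // r x y} ≃ {y // r x₀ y} := (nonempty_rel_fiber_equiv r hr x x₀).some
  rw [← Nat.card_prod]
  exact Nat.card_congr
    ((Equiv.subtypeProdEquivSigmaSubtype r).trans (Equiv.sigmaEquivProdOfEquiv e))

theorem card_mul_card_rel_eq [IsPretransitive G X] [IsPretransitive G Y] (r : X → Y → Prop)
    (hr : ∀ (g : G) x y, r (g • x) (g • y) ↔ r x y) (x₀ : X) (y₀ : Y) :
    Nat.card X * Nat.card {y // r x₀ y} = Nat.card Y * Nat.card {x // r x y₀} := by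
  rw [← card_rel_eq_card_mul r hr,
    ← card_rel_eq_card_mul (fun y x => r x y) (fun g y x => hr g x y)]
  exact Nat.card_congr ((Equiv.prodComm X Y).subtypeEquiv fun _ => Iff.rfl)

end DoubleCounting

theorem Subgroup.mem_orbit_conjAct_iff {G : Type*} [Group G] {H K : Subgroup G} :
    K ∈ orbit (ConjAct G) H ↔ ∃ g : G, K = H.map (MulAut.conj g).toMonoidHom :=
  ⟨fun ⟨c, hc⟩ => ⟨ConjAct.ofConjAct c, hc.symm⟩,
    fun ⟨g, hg⟩ => ⟨ConjAct.toConjAct g, hg.symm⟩⟩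

namespace Sylow

variable {G : Type*} [Group G] {p : ℕ} [Fact p.Prime] [Finite (Sylow p G)]

instance isPretransitive_conjAct : IsPretransitive (ConjAct G) (Sylow p G) :=
  ⟨fun P Q => let ⟨g, hg⟩ := exists_smul_eq G P Q; ⟨ConjAct.toConjAct g, hg⟩⟩

theorem le_of_le_normalizer {K : Subgroup G} {P Q : Sylow p G} (hP : (P : Subgroup G) ≤ K)
    (hQ : (Q : Subgroup G) ≤ normalizer (K : Set G)) : (Q : Subgroup G) ≤ K := by
  obtain ⟨n, hn⟩ := exists_smul_eq (normalizer (K : Set G))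
    (P.subtype (hP.trans le_normalizer)) (Q.subtype hQ)
  rw [smul_subtype] at hn
  rw [← subtype_injective hn]
  exact (pointwise_smul_le_pointwise_smul_iff.2 hP).trans_eq
    (conjAct_pointwise_smul_eq_self n.2)

theorem card_subgroup_eq_card_le {H : Subgroup G} {P : Sylow p G} (hP : (P : Subgroup G) ≤ H) :
    Nat.card (Sylow p H) = Nat.card {Q : Sylow p G // (Q : Subgroup G) ≤ H} := by
  refine (Nat.card_eq_of_bijective (fun Q => Q.1.subtype Q.2) ⟨?_, fun S => ?_⟩).symm
  · exact fun Q R h => Subtype.ext (subtype_injective h)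
  · obtain ⟨h, rfl⟩ := exists_smul_eq H (P.subtype hP) S
    exact ⟨⟨(h : G) • P, smul_le hP h⟩, (smul_subtype hP h).symm⟩

theorem le_normalizer_iff_le_of_mem_orbit {H K : Subgroup G} {P : Sylow p G}
    (hPH : (P : Subgroup G) ≤ H) (hK : K ∈ orbit (ConjAct G) H) (Q : Sylow p G) :
    (Q : Subgroup G) ≤ normalizer (K : Set G) ↔ (Q : Subgroup G) ≤ K := by
  obtain ⟨g, rfl⟩ := hK
  refine ⟨le_of_le_normalizer (P := g • P) ?_, fun h => h.trans le_normalizer⟩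
  exact pointwise_smul_le_pointwise_smul_iff.2 hPH

theorem card_mul_card_orbit_le_eq {H : Subgroup G} {P : Sylow p G} (hPH : (P : Subgroup G) ≤ H) :
    Nat.card (Sylow p G) * Nat.card {K : orbit (ConjAct G) H // (P : Subgroup G) ≤ K} =
      Nat.card (orbit (ConjAct G) H) * Nat.card (Sylow p H) := by
  rw [card_subgroup_eq_card_le hPH]
  exact card_mul_card_rel_eq
    (fun (Q : Sylow p G) (K : orbit (ConjAct G) H) => (Q : Subgroup G) ≤ K)
    (fun g Q K => by rw [orbit.coe_smul, pointwise_smul_def, pointwise_smul_le_pointwise_smul_iff])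
    P ⟨H, mem_orbit_self H⟩

end Sylow

theorem stmt11_general (p : ℕ) (hp : p.Prime) (G : Type) [Group G] [Finite G]
    (H : Subgroup G) (P : Sylow p G) (hPH : (P : Subgroup G) ≤ H) :
    Nat.card (Sylow p G) *
        Nat.card {K : Subgroup G |
          (∃ g : G, K = Subgroup.map (MulAut.conj g).toMonoidHom H) ∧
          ∀ x ∈ (P : Subgroup G), Subgroup.map (MulAut.conj x).toMonoidHom K = K} =
      Nat.card (Sylow p H) *
        Nat.card {K : Subgroup G |
          ∃ g : G, K = Subgroup.map (MulAut.conj g).toMonoidHom H} := by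
  have : Fact p.Prime := ⟨hp⟩
  have hfixed : {K : Subgroup G |
      (∃ g : G, K = Subgroup.map (MulAut.conj g).toMonoidHom H) ∧
      ∀ x ∈ (P : Subgroup G), Subgroup.map (MulAut.conj x).toMonoidHom K = K} =
      {K | K ∈ orbit (ConjAct G) H ∧ (P : Subgroup G) ≤ K} := by
    ext K
    rw [Set.mem_ofPred_eq, ← mem_orbit_conjAct_iff]
    refine and_congr_right fun hK => ?_
    rw [← Sylow.le_normalizer_iff_le_of_mem_orbit hPH hK]
    exact forall₂_congr fun x _ => conjAct_pointwise_smul_iff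
  have hΩ : {K : Subgroup G | ∃ g : G, K = Subgroup.map (MulAut.conj g).toMonoidHom H} =
      orbit (ConjAct G) H := Set.ext fun _ => mem_orbit_conjAct_iff.symm
  rw [hfixed, hΩ, mul_comm (Nat.card (Sylow p H)), ← Sylow.card_mul_card_orbit_le_eq hPH]
  congr 1
  exact Nat.card_congr (Equiv.subtypeSubtypeEquivSubtypeInter _ _).symm

/-- let `p` be a prime, `G` a finite group, `H` a maximal subgroup of `G`
containing a Sylow `p`-subgroup `P` of `G`, and let `Ω` be the set of conjugates of `H`
in `G`. Then `ν_p(G) ⬝ |C_Ω(P)| = ν_p(H) ⬝ |Ω|`, i.e. `ν_p(H)/ν_p(G) = fpr(P, Ω)`. -/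
theorem stmt11 (p : ℕ) (hp : p.Prime) (G : Type) [Group G] [Finite G]
    (H : Subgroup G) (hmax : IsCoatom H) (P : Sylow p G) (hPH : (P : Subgroup G) ≤ H) :
    Nat.card (Sylow p G) *
        Nat.card {K : Subgroup G |
          (∃ g : G, K = Subgroup.map (MulAut.conj g).toMonoidHom H) ∧
          ∀ x ∈ (P : Subgroup G), Subgroup.map (MulAut.conj x).toMonoidHom K = K} =
      Nat.card (Sylow p H) *
        Nat.card {K : Subgroup G |
          ∃ g : G, K = Subgroup.map (MulAut.conj g).toMonoidHom H} :=
  stmt11_general p hp G H P hPH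
end

section
/- Let p be a prime and let G be a nontrivial finite group generated by its p-elements. If H_1, …, H_k are proper subgroups of G whose union contains every p-element of G, then k ≥ p+1. (Equivalently, σ_p(G) ≥ p+1, where σ_p(G) is the minimal number of proper subgroups of G needed to cover the set of p-elements of G.) -/
/-!
If `G` is a `p`-group, proper subgroups have index at least `p`, so `p` of them cover at most
`|G| - p + 1` elements.

Otherwise induct on `|G|`, and let `K` be maximal among the proper subgroups that contain a Sylow
`p`-subgroup and are generated by their `p`-elements. Each such subgroup `L` lies in some `H i`,
since otherwise the `H i ∩ L` would cover the `p`-elements of the smaller group `L`. Two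
conjugates of `K` inside a common proper subgroup coincide, because the `p`-elements of their
join generate a subgroup of the same kind; so distinct conjugates of `K` need distinct `H i`.
As `G` is generated by its `p`-elements, a Sylow subgroup `P ≤ K` is not contained in some
conjugate `K'`. The `p`-elements normalising `K'` lie in `K'`, so `P` moves `K'`: the `P`-orbit
of `K'` has at least `p` members, none equal to `K`, giving `p + 1` conjugates of `K`.
-/

open scoped Pointwise

namespace PElementCover

open Subgroup

variable {p : ℕ} {G : Type*} [Group G]

theorem lt_card_of_iUnion_eq_univ [Finite G] [Nontrivial G] {ι : Type*} [Finite ι]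
    {H : ι → Subgroup G} {m : ℕ} (hm : 2 ≤ m) (hidx : ∀ i, m ≤ (H i).index)
    (hcov : ⋃ i, (H i : Set G) = Set.univ) : m < Nat.card ι := by
  have := Fintype.ofFinite ι
  have hcard : ∀ i, Nat.card (H i) ≤ Nat.card G / m := fun i =>
    (Nat.le_div_iff_mul_le (by omega)).mpr
      ((Nat.mul_le_mul_left _ (hidx i)).trans (H i).card_mul_index.le)
  have hcover : ({1}ᶜ : Set G) ⊆ ⋃ i, ((H i : Set G) \ {1}) := by
    intro x hx
    obtain ⟨i, hi⟩ := Set.mem_iUnion.mp (hcov ▸ Set.mem_univ x)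
    exact Set.mem_iUnion.mpr ⟨i, hi, hx⟩
  have hsum : Nat.card G - 1 ≤ ∑ i, (Nat.card (H i) - 1) := calc
    Nat.card G - 1 = ({1}ᶜ : Set G).ncard := by
      rw [Set.ncard_compl, Set.ncard_singleton]
    _ ≤ (⋃ i, ((H i : Set G) \ {1})).ncard := Set.ncard_le_ncard hcover
    _ ≤ ∑ i, ((H i : Set G) \ {1}).ncard := Set.ncard_iUnion_le_of_fintype _
    _ = ∑ i, (Nat.card (H i) - 1) := Finset.sum_congr rfl fun i _ => by
      rw [Set.ncard_sdiff_singleton_of_mem (H i).one_mem, ← Nat.card_coe_set_eq]; rfl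
  by_contra! hk
  have hsum_le : ∑ i, (Nat.card (H i) - 1) ≤ m * (Nat.card G / m - 1) := calc
    _ ≤ ∑ _i : ι, (Nat.card G / m - 1) :=
      Finset.sum_le_sum fun i _ => Nat.sub_le_sub_right (hcard i) 1
    _ = Nat.card ι * (Nat.card G / m - 1) := by simp [Nat.card_eq_fintype_card]
    _ ≤ m * (Nat.card G / m - 1) := Nat.mul_le_mul_right _ hk
  have hdiv := Nat.mul_div_le (Nat.card G) m
  have hG := Finite.one_lt_card (α := G)
  rw [Nat.mul_sub_one] at hsum_le
  omega

theorem add_one_le_card_of_isPGroup [Finite G] [Nontrivial G] [Fact p.Prime]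
    (hG : IsPGroup p G) {ι : Type*} [Finite ι] {H : ι → Subgroup G} (hH : ∀ i, H i ≠ ⊤)
    (hcov : ⋃ i, (H i : Set G) = Set.univ) : p + 1 ≤ Nat.card ι := by
  refine lt_card_of_iUnion_eq_univ (Fact.out : p.Prime).two_le (fun i => ?_) hcov
  obtain ⟨n, hn⟩ := hG.index (H i)
  rw [hn]
  exact Nat.le_self_pow (fun hn0 => hH i (index_eq_one.mp (by rw [hn, hn0, pow_zero]))) p

variable (p G) in
def pElements : Set G := {x | ∃ n : ℕ, orderOf x = p ^ n}

theorem mem_pElements_map_iff {G' : Type*} [Group G'] {f : G →* G'} (hf : Function.Injective f)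
    {x : G} : f x ∈ pElements p G' ↔ x ∈ pElements p G := by
  simp only [pElements, Set.mem_ofPred_eq, orderOf_injective f hf]

theorem subtype_image_pElements (L : Subgroup G) :
    L.subtype '' pElements p L = (L : Set G) ∩ pElements p G := by
  ext x
  constructor
  · rintro ⟨y, hy, rfl⟩
    exact ⟨y.2, (mem_pElements_map_iff L.subtype_injective).mpr hy⟩
  · rintro ⟨hxL, hx⟩
    exact ⟨⟨x, hxL⟩, (mem_pElements_map_iff L.subtype_injective).mp hx, rfl⟩

theorem smul_pElements (σ : MulAut G) : σ • pElements p G = pElements p G := by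
  ext x
  rw [Set.mem_smul_set_iff_inv_smul_mem]
  exact mem_pElements_map_iff (f := (σ⁻¹ : MulAut G).toMonoidHom) (MulEquiv.injective _)

theorem mem_pElements_iff_exists_sylow [Finite G] [Fact p.Prime] {x : G} :
    x ∈ pElements p G ↔ ∃ P : Sylow p G, x ∈ P := by
  constructor
  · rintro ⟨n, hn⟩
    obtain ⟨P, hP⟩ := (IsPGroup.of_card (p := p) (G := zpowers x) (n := n)
      (by rw [Nat.card_zpowers, hn])).exists_le_sylow
    exact ⟨P, hP (mem_zpowers x)⟩
  · rintro ⟨P, hx⟩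
    obtain ⟨n, hn⟩ := IsPGroup.iff_orderOf.mp P.isPGroup' ⟨x, hx⟩
    exact ⟨n, by rwa [Subgroup.orderOf_mk] at hn⟩

theorem one_mem_pElements : (1 : G) ∈ pElements p G :=
  ⟨0, by rw [orderOf_one, pow_zero]⟩

variable (p) in
def pElementClosure (S : Subgroup G) : Subgroup G := closure ((S : Set G) ∩ pElements p G)

theorem pElementClosure_le (S : Subgroup G) : pElementClosure p S ≤ S :=
  closure_le S |>.mpr Set.inter_subset_left

theorem pElementClosure_mono {S T : Subgroup G} (h : S ≤ T) :
    pElementClosure p S ≤ pElementClosure p T :=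
  closure_mono (Set.inter_subset_inter_left _ h)

theorem pElementClosure_smul (σ : MulAut G) (S : Subgroup G) :
    pElementClosure p (σ • S) = σ • pElementClosure p S := by
  rw [pElementClosure, pElementClosure, smul_closure, Set.smul_set_inter, smul_pElements,
    coe_pointwise_smul]

variable (p) in
def IsPGenerated (L : Subgroup G) : Prop := pElementClosure p L = L

theorem isPGenerated_pElementClosure (S : Subgroup G) : IsPGenerated p (pElementClosure p S) :=
  (pElementClosure_le _).antisymm <| closure_le _ |>.mpr fun _ hx =>
    Subgroup.subset_closure ⟨Subgroup.subset_closure hx, hx.2⟩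

theorem isPGenerated_of_subset {L : Subgroup G} (h : (L : Set G) ⊆ pElements p G) :
    IsPGenerated p L := by
  rw [IsPGenerated, pElementClosure, Set.inter_eq_left.mpr h, closure_eq]

theorem IsPGenerated.le_pElementClosure {L S : Subgroup G} (hL : IsPGenerated p L)
    (h : L ≤ S) : L ≤ pElementClosure p S :=
  hL ▸ pElementClosure_mono h

theorem IsPGenerated.smul {L : Subgroup G} (hL : IsPGenerated p L) (σ : MulAut G) :
    IsPGenerated p (σ • L) := by
  rw [IsPGenerated, pElementClosure_smul, hL]

theorem IsPGenerated.closure_pElements_eq_top {L : Subgroup G} (hL : IsPGenerated p L) :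
    closure (pElements p L) = ⊤ := by
  apply map_injective L.subtype_injective
  rw [MonoidHom.map_closure, subtype_image_pElements, ← MonoidHom.range_eq_map, range_subtype]
  exact hL

variable (p) in
structure IsProperPGenOverSylow (L : Subgroup G) : Prop where
  isPGenerated : IsPGenerated p L
  ne_top : L ≠ ⊤
  exists_sylow_le : ∃ P : Sylow p G, ↑P ≤ L

theorem IsProperPGenOverSylow.smul {L : Subgroup G} (hL : IsProperPGenOverSylow p L)
    (σ : MulAut G) : IsProperPGenOverSylow p (σ • L) := by
  obtain ⟨hLgen, htop, P, hPL⟩ := hL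
  refine ⟨hLgen.smul σ, fun h => htop (eq_top_iff' L |>.mpr fun x => ?_), σ • P,
    pointwise_smul_le_pointwise_smul_iff.mpr hPL⟩
  rw [← smul_mem_pointwise_smul_iff (a := σ), h]
  exact mem_top _

theorem IsProperPGenOverSylow.pElementClosure {L S : Subgroup G}
    (hL : IsProperPGenOverSylow p L) (hLS : L ≤ S) (hS : S ≠ ⊤) :
    IsProperPGenOverSylow p (pElementClosure p S) := by
  obtain ⟨P, hPL⟩ := hL.exists_sylow_le
  exact ⟨isPGenerated_pElementClosure S, ne_top_of_le_ne_top hS (pElementClosure_le S), P,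
    hPL.trans (hL.isPGenerated.le_pElementClosure hLS)⟩

theorem maximal_isProperPGenOverSylow_smul {K : Subgroup G}
    (hK : Maximal (IsProperPGenOverSylow p) K) (σ : MulAut G) :
    Maximal (IsProperPGenOverSylow p) (σ • K) :=
  ⟨hK.prop.smul σ, fun L hL hle => by
    rw [pointwise_smul_subset_iff] at hle
    exact subset_pointwise_smul_iff.mpr (hK.le_of_ge (hL.smul σ⁻¹) hle)⟩

theorem eq_of_maximal_of_sup_ne_top {K₁ K₂ : Subgroup G}
    (h₁ : Maximal (IsProperPGenOverSylow p) K₁) (h₂ : Maximal (IsProperPGenOverSylow p) K₂)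
    (hsup : K₁ ⊔ K₂ ≠ ⊤) : K₁ = K₂ := by
  have hX := h₁.prop.pElementClosure le_sup_left hsup
  exact (h₁.eq_of_le hX (h₁.prop.isPGenerated.le_pElementClosure le_sup_left)).trans
    (h₂.eq_of_le hX (h₂.prop.isPGenerated.le_pElementClosure le_sup_right)).symm

theorem ncard_conjugates_le {ι : Type*} [Finite ι] {H : ι → Subgroup G}
    (hH : ∀ i, H i ≠ ⊤) (hcand : ∀ L, IsProperPGenOverSylow p L → ∃ i, L ≤ H i)
    {K : Subgroup G} (hK : Maximal (IsProperPGenOverSylow p) K) :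
    (Set.range fun g : G => MulAut.conj g • K).ncard ≤ Nat.card ι := by
  have hmax : ∀ L ∈ Set.range fun g : G => MulAut.conj g • K,
      Maximal (IsProperPGenOverSylow p) L := by
    rintro _ ⟨g, rfl⟩
    exact maximal_isProperPGenOverSylow_smul hK _
  choose f hf using fun L : Set.range (fun g : G => MulAut.conj g • K) =>
    hcand L (hmax L L.2).prop
  rw [← Nat.card_coe_set_eq]
  refine Nat.card_le_card_of_injective f fun L₁ L₂ h => Subtype.ext ?_
  exact eq_of_maximal_of_sup_ne_top (hmax _ L₁.2) (hmax _ L₂.2)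
    (ne_top_of_le_ne_top (hH (f L₁)) (sup_le (hf L₁) (h ▸ hf L₂)))

section Sylow

variable [Finite G] [Fact p.Prime]

theorem le_card_orbit_conj {P S : Subgroup G} (hP : IsPGroup p P)
    (hPS : ¬ P ≤ normalizer (S : Set G)) :
    p ≤ Nat.card (MulAction.orbit (P.map MulAut.conj) S) := by
  obtain ⟨n, hn⟩ := (hP.map MulAut.conj).card_orbit S
  rw [hn]
  refine Nat.le_self_pow (fun hn0 => hPS fun u hu => ?_) p
  rw [hn0, pow_zero, Nat.card_eq_one_iff_unique] at hn
  exact mem_normalizer_iff_map_conj_eq.mpr <| congrArg Subtype.val <| hn.1.allEq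
    ⟨_, MulAction.mem_orbit S ⟨MulAut.conj u, mem_map_of_mem _ hu⟩⟩
    ⟨S, MulAction.mem_orbit_self S⟩

theorem eq_top_of_forall_sylow_le (hgen : closure (pElements p G) = ⊤) {N : Subgroup G}
    (hN : ∀ P : Sylow p G, ↑P ≤ N) : N = ⊤ := by
  rw [eq_top_iff, ← hgen, closure_le]
  intro x hx
  obtain ⟨P, hxP⟩ := mem_pElements_iff_exists_sylow.mp hx
  exact hN P hxP

theorem IsProperPGenOverSylow.not_normal (hgen : closure (pElements p G) = ⊤)
    {L : Subgroup G} (hL : IsProperPGenOverSylow p L) : ¬ L.Normal := by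
  intro hnormal
  obtain ⟨P, hPL⟩ := hL.exists_sylow_le
  refine hL.ne_top (eq_top_of_forall_sylow_le hgen fun Q => ?_)
  obtain ⟨g, rfl⟩ := MulAction.exists_smul_eq G P Q
  rw [Sylow.coe_subgroup_smul, ← hnormal.conj_smul_eq_self g]
  exact pointwise_smul_le_pointwise_smul_iff.mpr hPL

theorem mem_of_mem_normalizer_of_maximal (hgen : closure (pElements p G) = ⊤)
    {K : Subgroup G} (hK : Maximal (IsProperPGenOverSylow p) K) {x : G}
    (hxN : x ∈ normalizer (K : Set G))
    (hx : x ∈ pElements p G) : x ∈ K := by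
  have hN : normalizer (K : Set G) ≠ ⊤ := fun h =>
    hK.prop.not_normal hgen (normalizer_eq_top_iff.mp h)
  have hKN := hK.prop.isPGenerated.le_pElementClosure le_normalizer
  exact hK.le_of_ge (hK.prop.pElementClosure le_normalizer hN) hKN
    (Subgroup.subset_closure ⟨hxN, hx⟩)

theorem add_one_le_ncard_conjugates (hgen : closure (pElements p G) = ⊤) {K : Subgroup G}
    (hK : Maximal (IsProperPGenOverSylow p) K) :
    p + 1 ≤ (Set.range fun g : G => MulAut.conj g • K).ncard := by
  obtain ⟨P, hPK⟩ := hK.prop.exists_sylow_le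
  obtain ⟨g, hg⟩ : ∃ g : G, ¬ ↑P ≤ MulAut.conj g • K := by
    by_contra! h
    refine hK.prop.ne_top (eq_top_of_forall_sylow_le hgen fun Q => ?_)
    obtain ⟨g, rfl⟩ := MulAction.exists_smul_eq G P Q
    rw [Sylow.coe_subgroup_smul, pointwise_smul_subset_iff, ← map_inv]
    exact h g⁻¹
  set K' := MulAut.conj g • K
  have hPN : ¬ ↑P ≤ normalizer (K' : Set G) := fun h => hg fun x hx =>
    mem_of_mem_normalizer_of_maximal hgen (maximal_isProperPGenOverSylow_smul hK _) (h hx)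
      (mem_pElements_iff_exists_sylow.mpr ⟨P, hx⟩)
  set O := MulAction.orbit ((P : Subgroup G).map MulAut.conj) K'
  have hKO : K ∉ O := by
    rintro ⟨⟨_, u, hu, rfl⟩, h⟩
    replace h : MulAut.conj u • K' = K := h
    rw [smul_eq_iff_eq_inv_smul, ← map_inv, conj_smul_eq_self_of_mem (inv_mem (hPK hu))] at h
    exact hg (h ▸ hPK)
  have hsub : insert K O ⊆ Set.range fun g : G => MulAut.conj g • K := by
    rintro _ (rfl | ⟨⟨_, u, -, rfl⟩, rfl⟩)
    · exact ⟨1, by simp⟩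
    · exact ⟨u * g, by simp only [map_mul, mul_smul]; rfl⟩
  calc p + 1 ≤ (insert K O).ncard := by
        rw [Set.ncard_insert_of_notMem hKO, ← Nat.card_coe_set_eq]
        exact Nat.add_le_add_right (le_card_orbit_conj P.isPGroup' hPN) 1
    _ ≤ _ := Set.ncard_le_ncard hsub

end Sylow

theorem add_one_le_card_of_pElements_subset_iUnion [Finite G] [Nontrivial G] [Fact p.Prime]
    (hgen : closure (pElements p G) = ⊤) {ι : Type*} [Finite ι]
    {H : ι → Subgroup G} (hH : ∀ i, H i ≠ ⊤)
    (hcov : pElements p G ⊆ ⋃ i, (H i : Set G)) :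
    p + 1 ≤ Nat.card ι := by
  induction hn : Nat.card G using Nat.strong_induction_on generalizing G with
  | _ n ih =>
  by_cases hG : IsPGroup p G
  · exact add_one_le_card_of_isPGroup hG hH
      (Set.eq_univ_of_univ_subset fun x _ => hcov (IsPGroup.iff_orderOf.mp hG x))
  by_cases hcand : ∀ L, IsProperPGenOverSylow p L → ∃ i, L ≤ H i
  · obtain ⟨P⟩ := Sylow.nonempty (p := p) (G := G)
    have hP : IsProperPGenOverSylow p (P : Subgroup G) :=
      ⟨isPGenerated_of_subset fun x hx => mem_pElements_iff_exists_sylow.mpr ⟨P, hx⟩,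
        fun h => hG ((h ▸ P.isPGroup').of_equiv topEquiv), P, le_rfl⟩
    obtain ⟨K, -, hK⟩ := Finite.exists_le_maximal hP
    exact (add_one_le_ncard_conjugates hgen hK).trans (ncard_conjugates_le hH hcand hK)
  push Not at hcand
  obtain ⟨L, hL, hLH⟩ := hcand
  obtain ⟨i₀, -⟩ := Set.mem_iUnion.mp (hcov one_mem_pElements)
  have : Nontrivial L := (nontrivial_iff_ne_bot L).mpr fun h => hLH i₀ (h ▸ bot_le)
  refine ih _ (hn ▸ (card_le_card_group L).lt_of_ne fun h => hL.ne_top (eq_top_of_card_eq L h))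
    hL.isPGenerated.closure_pElements_eq_top (H := fun i => (H i).subgroupOf L)
    (fun i h => hLH i (subgroupOf_eq_top.mp h)) (fun y hy => ?_) rfl
  obtain ⟨i, hi⟩ :=
    Set.mem_iUnion.mp (hcov ((mem_pElements_map_iff L.subtype_injective).mpr hy))
  exact Set.mem_iUnion.mpr ⟨i, mem_subgroupOf.mpr hi⟩

end PElementCover

/-- let `p` be a prime and `G` a nontrivial finite group generated by its
`p`-elements. If `H 1, …, H k` are proper subgroups of `G` whose union contains every
`p`-element of `G`, then `k ≥ p + 1`. -/
theorem stmt15 (p : ℕ) (hp : p.Prime) (G : Type) [Group G] [Finite G] [Nontrivial G]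
    (hgen : Subgroup.closure {x : G | ∃ n : ℕ, orderOf x = p ^ n} = ⊤)
    (k : ℕ) (H : Fin k → Subgroup G) (hprop : ∀ i, H i ≠ ⊤)
    (hcov : ∀ x : G, (∃ n : ℕ, orderOf x = p ^ n) → ∃ i, x ∈ H i) :
    p + 1 ≤ k := by
  have := Fact.mk hp
  simpa using PElementCover.add_one_le_card_of_pElements_subset_iUnion hgen hprop
    fun x hx => Set.mem_iUnion.mpr (hcov x hx)
end

section
/- For all positive integers m and n there exists a bound B such that for every set of primes π and every finite group G the following holds: if for all subsets S₁, S₂ of the set G_π of π-elements of G with |S₁| = m and |S₂| = n there exist x ∈ S₁ and y ∈ S₂ with xy = yx, and if the π-part of |G| exceeds B, then G possesses an abelian Hall π-subgroup. -/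
/-!
The π-elements of `G` form a finite set `P` that is closed under conjugation and under products
of commuting elements. In the non-commuting graph on `P`, every edge has an endpoint of degree at
least `|P|/3`: if `u` and `v` do not commute, `z ↦ u z` maps `C_P(u) ∩ C_P(v)` injectively to the
non-commuting partners of `v`. A Kővári–Sós–Turán count shows that the hypothesis allows fewer
than `3m` such hubs once `|P|` is large, so a non-commuting pair produces an element `w` with
`|C_P(w)| < 6m`. Let `Q ⊆ P` be a large `p`-subgroup, `p ∈ π`, which exists because the π-part
of `|G|` is large. If `w` has at least `m` conjugates under `Q`, these commute with fewer than
`6m²` elements of `P`, and fewer than `n` elements of `P` commute with none of them; otherwise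
`|Q| ≤ |C_P(w)| (m - 1)`. Both contradict the size of `Q`, so the π-elements commute pairwise.
They then form an abelian subgroup containing every Sylow `q`-subgroup for `q ∈ π`, which is a
Hall π-subgroup.
-/

open Finset

def IsPiNumber (π : Set ℕ) (k : ℕ) : Prop := ∀ q : ℕ, q.Prime → q ∣ k → q ∈ π

def IsPiElement {G : Type*} [Monoid G] (π : Set ℕ) (x : G) : Prop := IsPiNumber π (orderOf x)

namespace IsPiNumber

variable {π : Set ℕ} {k l : ℕ}

theorem of_dvd (hl : IsPiNumber π l) (hkl : k ∣ l) : IsPiNumber π k :=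
  fun q hq hqk => hl q hq (hqk.trans hkl)

theorem mul (hk : IsPiNumber π k) (hl : IsPiNumber π l) : IsPiNumber π (k * l) :=
  fun q hq hqkl => (hq.dvd_mul.mp hqkl).elim (hk q hq) (hl q hq)

theorem prime_pow {p : ℕ} (hp : p.Prime) (hpπ : p ∈ π) (e : ℕ) : IsPiNumber π (p ^ e) :=
  fun _ hq hqp => (Nat.prime_dvd_prime_iff_eq hq hp).mp (hq.dvd_of_dvd_pow hqp) ▸ hpπ

end IsPiNumber

namespace IsPiElement

variable {G : Type*} [Group G] {π : Set ℕ} {x y : G}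

theorem mul (hx : IsPiElement π x) (hy : IsPiElement π y) (hxy : Commute x y) :
    IsPiElement π (x * y) :=
  (IsPiNumber.mul hx hy).of_dvd hxy.orderOf_mul_dvd_mul_orderOf

theorem conj (hx : IsPiElement π x) (g : G) : IsPiElement π (g * x * g⁻¹) := by
  have := (MulAut.conj g).orderOf_eq x
  rw [MulAut.conj_apply] at this
  rwa [IsPiElement, this]

theorem of_mem_subgroup {H : Subgroup G} [Finite H] (hH : IsPiNumber π (Nat.card H))
    (hx : x ∈ H) : IsPiElement π x :=
  hH.of_dvd (Subgroup.orderOf_dvd_natCard H hx)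

end IsPiElement

theorem Nat.exists_mem_primeFactors_lt_ordProj {b d : ℕ} (hb : 0 < b) (hd : b ^ b < d) :
    ∃ p ∈ d.primeFactors, b < ordProj[p] d := by
  by_contra! hsmall
  have hd0 : d ≠ 0 := by omega
  have hcard : #d.primeFactors ≤ b := by
    refine (card_le_card fun p hp => mem_Icc.mpr ⟨?_, ?_⟩).trans_eq (Nat.card_Icc 1 b)
    · exact (Nat.prime_of_mem_primeFactors hp).one_lt.le
    · have : d.factorization p ≠ 0 :=
        (Nat.prime_of_mem_primeFactors hp).factorization_pos_of_dvd hd0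
          (Nat.dvd_of_mem_primeFactors hp) |>.ne'
      exact (Nat.le_self_pow this p).trans (hsmall p hp)
  have : d ≤ b ^ b :=
    calc d = ∏ p ∈ d.primeFactors, ordProj[p] d := Nat.prod_primeFactors_pow_factorization hd0
      _ ≤ b ^ #d.primeFactors := prod_le_pow_card _ _ _ hsmall
      _ ≤ b ^ b := Nat.pow_le_pow_right hb hcard
  omega

theorem Nat.le_pred_add_mul_choose {c k : ℕ} (m : ℕ) (hck : c ≤ k) :
    c ≤ m - 1 + k * c.choose m := by
  rcases lt_or_ge c m with hcm | hmc
  · omega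
  · nlinarith [Nat.choose_pos hmc]

namespace Finset

section Counting

variable {α β : Type*}

theorem powersetCard_filter_eq_filter_powersetCard (U : Finset α) (p : α → Prop)
    [DecidablePred p] (m : ℕ) :
    powersetCard m {x ∈ U | p x} = {S ∈ U.powersetCard m | ∀ x ∈ S, p x} := by
  ext S
  simp only [mem_powersetCard, mem_filter, subset_iff]
  grind

theorem sum_choose_card_filter_eq_sum_card_filter_forall (U : Finset α) (Y : Finset β)
    (r : α → β → Prop) [DecidableRel r] (m : ℕ) :
    ∑ y ∈ Y, (#{x ∈ U | r x y}).choose m =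
      ∑ S ∈ U.powersetCard m, #{y ∈ Y | ∀ x ∈ S, r x y} := by
  simp_rw [← card_powersetCard, powersetCard_filter_eq_filter_powersetCard]
  exact (sum_card_bipartiteAbove_eq_sum_card_bipartiteBelow (fun S y => ∀ x ∈ S, r x y)).symm

theorem sum_card_filter_le_of_card_filter_forall_lt (U : Finset α) (Y : Finset β)
    (r : α → β → Prop) [DecidableRel r] {m n : ℕ}
    (h : ∀ S ⊆ U, #S = m → #{y ∈ Y | ∀ x ∈ S, r x y} < n) :
    ∑ x ∈ U, #{y ∈ Y | r x y} ≤ (m - 1) * #Y + #U * ((#U).choose m * n) := by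
  have hcommon : ∑ S ∈ U.powersetCard m, #{y ∈ Y | ∀ x ∈ S, r x y} ≤ (#U).choose m * n := by
    rw [← card_powersetCard, ← smul_eq_mul]
    refine sum_le_card_nsmul _ _ _ fun S hS => ?_
    obtain ⟨hSU, hSm⟩ := mem_powersetCard.mp hS
    exact (h S hSU hSm).le
  calc ∑ x ∈ U, #{y ∈ Y | r x y} = ∑ y ∈ Y, #{x ∈ U | r x y} :=
        sum_card_bipartiteAbove_eq_sum_card_bipartiteBelow r
    _ ≤ ∑ y ∈ Y, (m - 1 + #U * (#{x ∈ U | r x y}).choose m) :=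
        sum_le_sum fun y _ => Nat.le_pred_add_mul_choose m (card_filter_le _ _)
    _ = (m - 1) * #Y + #U * ∑ S ∈ U.powersetCard m, #{y ∈ Y | ∀ x ∈ S, r x y} := by
        rw [sum_add_distrib, ← mul_sum, sum_choose_card_filter_eq_sum_card_filter_forall,
          sum_const, smul_eq_mul, mul_comm]
    _ ≤ (m - 1) * #Y + #U * ((#U).choose m * n) := by gcongr

end Counting

theorem natCard_subgroup_eq_card_filter {G : Type*} [Group G] {P : Finset G} (Q : Subgroup G)
    [DecidablePred (· ∈ Q)] (hQP : ∀ x ∈ Q, x ∈ P) : Nat.card Q = #{g ∈ P | g ∈ Q} := by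
  rw [← Nat.card_eq_finsetCard]
  exact Nat.card_congr (Equiv.subtypeEquivRight fun g => by simpa using fun hg => hQP g hg)

end Finset

instance Commute.decidable {M : Type*} [Mul M] [DecidableEq M] (a b : M) :
    Decidable (Commute a b) :=
  decEq (a * b) (b * a)

/- The summands make `P` large enough for `Finset.card_noncommHubs_lt`, give a hub at least `3m`
non-commuting partners (`9m`), and refute the two cases of
`Finset.commute_of_commutingBound_lt_card` (`6m²` and `n`). -/
def commutingBound (m n : ℕ) : ℕ := 3 * m * ((3 * m).choose m * n) + 6 * m * m + 9 * m + n

namespace Finset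

variable {G : Type*} [Group G] [DecidableEq G] {P : Finset G} {m n : ℕ}

def commutingIn (P : Finset G) (y : G) : Finset G := {x ∈ P | Commute y x}

def noncommutingIn (P : Finset G) (y : G) : Finset G := {x ∈ P | ¬Commute y x}

/-- The vertices of degree at least `#P / 3` in the non-commuting graph on `P`. -/
def noncommHubs (P : Finset G) : Finset G := {v ∈ P | #P ≤ 3 * #(P.noncommutingIn v)}

theorem card_commutingIn_add_card_noncommutingIn (P : Finset G) (y : G) :
    #(P.commutingIn y) + #(P.noncommutingIn y) = #P :=
  card_filter_add_card_filter_not _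

theorem card_commutingIn_le_two_mul_card_noncommutingIn
    (hmul : ∀ x ∈ P, ∀ y ∈ P, Commute x y → x * y ∈ P) {u v : G} (hu : u ∈ P)
    (huv : ¬Commute u v) : #(P.commutingIn u) ≤ 2 * #(P.noncommutingIn v) := by
  rw [← card_filter_add_card_filter_not (p := fun z => Commute v z)]
  have hboth : #{z ∈ P.commutingIn u | Commute v z} ≤ #(P.noncommutingIn v) := by
    refine card_le_card_of_injOn (u * ·) (fun z hz => ?_) (fun _ _ _ _ => mul_left_cancel)
    simp only [commutingIn, noncommutingIn, coe_filter, mem_filter, Set.mem_ofPred_eq] at hz ⊢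
    obtain ⟨⟨hzP, huz⟩, hvz⟩ := hz
    refine ⟨hmul u hu z hzP huz, fun hvuz => huv ?_⟩
    simpa using (hvuz.mul_right hvz.inv_right).symm
  have hone : #{z ∈ P.commutingIn u | ¬Commute v z} ≤ #(P.noncommutingIn v) :=
    card_le_card fun z hz => by
      simp only [commutingIn, noncommutingIn, mem_filter] at hz ⊢
      exact ⟨hz.1.1, hz.2⟩
  omega

theorem mem_noncommHubs_or_mem_noncommHubs (hmul : ∀ x ∈ P, ∀ y ∈ P, Commute x y → x * y ∈ P)
    {u v : G} (hu : u ∈ P) (hv : v ∈ P) (huv : ¬Commute u v) :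
    u ∈ P.noncommHubs ∨ v ∈ P.noncommHubs := by
  have hu' := card_commutingIn_le_two_mul_card_noncommutingIn hmul hu huv
  have hv' := card_commutingIn_le_two_mul_card_noncommutingIn hmul hv (fun h => huv h.symm)
  have := card_commutingIn_add_card_noncommutingIn P u
  have := card_commutingIn_add_card_noncommutingIn P v
  simp only [noncommHubs, mem_filter, hu, hv, true_and]
  omega

theorem card_noncommHubs_lt (hm : 0 < m)
    (hP : ∀ S ⊆ P, #S = m → #{y ∈ P | ∀ x ∈ S, ¬Commute x y} < n)
    (hbig : 3 * m * ((3 * m).choose m * n) < #P) : #P.noncommHubs < 3 * m := by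
  by_contra! hhubs
  obtain ⟨U, hU, hUcard⟩ := exists_subset_card_eq hhubs
  have hUP : U ⊆ P := hU.trans (filter_subset _ _)
  have hlower : 3 * (m * #P) ≤ 3 * ∑ u ∈ U, #{y ∈ P | ¬Commute u y} := by
    calc 3 * (m * #P) = ∑ _u ∈ U, #P := by rw [sum_const, hUcard, smul_eq_mul]; ring
      _ ≤ ∑ u ∈ U, 3 * #(P.noncommutingIn u) := sum_le_sum fun u hu => (mem_filter.mp (hU hu)).2
      _ = 3 * ∑ u ∈ U, #{y ∈ P | ¬Commute u y} := (mul_sum _ _ _).symm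
  have hupper := sum_card_filter_le_of_card_filter_forall_lt U P (fun x y => ¬Commute x y)
    (fun S hS => hP S (hS.trans hUP))
  rw [hUcard] at hupper
  have hm' : m * #P = (m - 1) * #P + #P := by
    rw [← Nat.succ_mul, Nat.succ_eq_add_one, Nat.sub_add_cancel hm]
  omega

theorem exists_card_commutingIn_lt (hmul : ∀ x ∈ P, ∀ y ∈ P, Commute x y → x * y ∈ P)
    (hhubs : #P.noncommHubs < 3 * m) (hP : 9 * m ≤ #P)
    {u v : G} (hu : u ∈ P) (hv : v ∈ P) (huv : ¬Commute u v) :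
    ∃ w ∈ P, #(P.commutingIn w) < 6 * m := by
  obtain ⟨w, hw⟩ : ∃ w, w ∈ P.noncommHubs :=
    (mem_noncommHubs_or_mem_noncommHubs hmul hu hv huv).elim (⟨u, ·⟩) (⟨v, ·⟩)
  obtain ⟨hwP, hwdeg⟩ := mem_filter.mp hw
  obtain ⟨q, hq, hq_hub⟩ :=
    exists_mem_notMem_of_card_lt_card (s := P.noncommHubs) (t := P.noncommutingIn w) (by omega)
  obtain ⟨hqP, hwq⟩ := mem_filter.mp hq
  -- every non-commuting partner of the non-hub `q` is a hub
  have hqdeg : #(P.noncommutingIn q) ≤ #P.noncommHubs := by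
    refine card_le_card fun z hz => ?_
    obtain ⟨hzP, hqz⟩ := mem_filter.mp hz
    exact (mem_noncommHubs_or_mem_noncommHubs hmul hqP hzP hqz).resolve_left hq_hub
  have := card_commutingIn_le_two_mul_card_noncommutingIn hmul hwP hwq
  exact ⟨w, hwP, by omega⟩

theorem card_le_card_filter_forall_add_sum_card_commutingIn (P S : Finset G) :
    #P ≤ #{y ∈ P | ∀ x ∈ S, ¬Commute x y} + ∑ x ∈ S, #(P.commutingIn x) := by
  calc #P ≤ #({y ∈ P | ∀ x ∈ S, ¬Commute x y} ∪ S.biUnion P.commutingIn) := by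
        refine card_le_card fun y hy => ?_
        by_cases hyS : ∀ x ∈ S, ¬Commute x y
        · exact mem_union_left _ (mem_filter.mpr ⟨hy, hyS⟩)
        · push Not at hyS
          obtain ⟨x, hx, hxy⟩ := hyS
          exact mem_union_right _ (mem_biUnion.mpr ⟨x, hx, mem_filter.mpr ⟨hy, hxy⟩⟩)
    _ ≤ _ := (card_union_le _ _).trans (by gcongr; exact card_biUnion_le)

theorem card_commutingIn_conj (hconj : ∀ g, ∀ x ∈ P, g * x * g⁻¹ ∈ P) (g w : G) :
    #(P.commutingIn (g * w * g⁻¹)) = #(P.commutingIn w) := by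
  refine card_nbij' (fun z => g⁻¹ * z * g) (fun z => g * z * g⁻¹) (fun z hz => ?_)
    (fun z hz => ?_) (fun z _ => by group) (fun z _ => by group)
  · obtain ⟨hzP, hwz⟩ := mem_filter.mp hz
    refine mem_filter.mpr ⟨by simpa using hconj g⁻¹ z hzP, ?_⟩
    simpa [mul_assoc] using hwz.conj g⁻¹
  · obtain ⟨hzP, hwz⟩ := mem_filter.mp hz
    exact mem_filter.mpr ⟨hconj g z hzP, hwz.conj g⟩

theorem card_subgroup_le_card_commutingIn_mul_card_conjugates (Q : Subgroup G)
    [DecidablePred (· ∈ Q)] (hQP : ∀ x ∈ Q, x ∈ P) (w : G) :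
    Nat.card Q ≤ #(P.commutingIn w) * #({g ∈ P | g ∈ Q}.image fun g => g * w * g⁻¹) := by
  rw [natCard_subgroup_eq_card_filter Q hQP]
  refine card_le_mul_card_image _ _ fun _ hb => ?_
  obtain ⟨g, hg, rfl⟩ := mem_image.mp hb
  refine card_le_card_of_injOn (g⁻¹ * ·) (fun h hh => ?_) (fun _ _ _ _ => mul_left_cancel)
  simp only [coe_filter, mem_filter, Set.mem_ofPred_eq] at hg hh
  refine mem_filter.mpr ⟨hQP _ (Q.mul_mem (Q.inv_mem hg.2) hh.1.2), ?_⟩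
  calc w * (g⁻¹ * h) = g⁻¹ * (g * w * g⁻¹) * h := by group
    _ = g⁻¹ * (h * w * h⁻¹) * h := by rw [hh.2]
    _ = g⁻¹ * h * w := by group

theorem card_filter_forall_not_commute_lt
    (h : ∀ S₁ ⊆ P, ∀ S₂ ⊆ P, #S₁ = m → #S₂ = n → ∃ x ∈ S₁, ∃ y ∈ S₂, Commute x y) :
    ∀ S ⊆ P, #S = m → #{y ∈ P | ∀ x ∈ S, ¬Commute x y} < n := by
  intro S hS hSm
  by_contra! hn
  obtain ⟨T, hT, hTn⟩ := exists_subset_card_eq hn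
  obtain ⟨x, hx, y, hy, hxy⟩ := h S hS T (hT.trans (filter_subset _ _)) hSm hTn
  exact (mem_filter.mp (hT hy)).2 x hx hxy

theorem commute_of_commutingBound_lt_card
    (hmul : ∀ x ∈ P, ∀ y ∈ P, Commute x y → x * y ∈ P) (hconj : ∀ g, ∀ x ∈ P, g * x * g⁻¹ ∈ P)
    (hm : 0 < m) (hP : ∀ S ⊆ P, #S = m → #{y ∈ P | ∀ x ∈ S, ¬Commute x y} < n)
    (Q : Subgroup G) [DecidablePred (· ∈ Q)] (hQP : ∀ x ∈ Q, x ∈ P)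
    (hQ : commutingBound m n < Nat.card Q) {u v : G} (hu : u ∈ P) (hv : v ∈ P) :
    Commute u v := by
  by_contra huv
  have hQP' : Nat.card Q ≤ #P := natCard_subgroup_eq_card_filter Q hQP ▸ card_filter_le _ _
  unfold commutingBound at hQ
  have hhubs : #P.noncommHubs < 3 * m := card_noncommHubs_lt hm hP (by omega)
  obtain ⟨w, hwP, hw⟩ := exists_card_commutingIn_lt hmul hhubs (by omega) hu hv huv
  set X := ({g ∈ P | g ∈ Q} : Finset G).image fun g => g * w * g⁻¹
  have hQX : Nat.card Q ≤ #(P.commutingIn w) * #X :=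
    card_subgroup_le_card_commutingIn_mul_card_conjugates Q hQP w
  rcases lt_or_ge #X m with hX | hX
  · have := Nat.mul_lt_mul'' hw hX
    omega
  · obtain ⟨S, hSX, hSm⟩ := exists_subset_card_eq hX
    have hSP : S ⊆ P := fun x hx => by
      obtain ⟨g, -, rfl⟩ := mem_image.mp (hSX hx)
      exact hconj g w hwP
    have hsum : ∑ x ∈ S, #(P.commutingIn x) = m * #(P.commutingIn w) := by
      rw [← hSm, ← smul_eq_mul, ← sum_const]
      refine sum_congr rfl fun x hx => ?_
      obtain ⟨g, -, rfl⟩ := mem_image.mp (hSX hx)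
      exact card_commutingIn_conj hconj g w
    have hcover := card_le_card_filter_forall_add_sum_card_commutingIn P S
    have := hP S hSP hSm
    have : m * #(P.commutingIn w) ≤ 6 * m * m := by nlinarith
    omega

end Finset

section PiElements

variable {G : Type*} [Group G] {π : Set ℕ}

def piElementsSubgroup (π : Set ℕ)
    (hcomm : ∀ x y : G, IsPiElement π x → IsPiElement π y → Commute x y) : Subgroup G where
  carrier := {x | IsPiElement π x}
  one_mem' := fun q hq hq1 => absurd (Nat.dvd_one.mp (orderOf_one (G := G) ▸ hq1)) hq.ne_one
  mul_mem' := fun hx hy => hx.mul hy (hcomm _ _ hx hy)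
  inv_mem' := fun hx => by simpa [IsPiElement, orderOf_inv] using hx

theorem isPiNumber_natCard_of_forall_isPiElement [Finite G] (h : ∀ x : G, IsPiElement π x) :
    IsPiNumber π (Nat.card G) := fun q hq hqG => by
  have := Fact.mk hq
  obtain ⟨x, hx⟩ := exists_prime_orderOf_dvd_card' q hqG
  exact h x q hq (hx ▸ dvd_rfl)

theorem not_dvd_index_of_forall_isPiElement_mem [Finite G] {H : Subgroup G}
    (hH : ∀ x, IsPiElement π x → x ∈ H) {q : ℕ} (hq : q.Prime) (hqπ : q ∈ π) :
    ¬q ∣ H.index := by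
  have := Fact.mk hq
  obtain ⟨S⟩ := Sylow.nonempty (p := q) (G := G)
  have hSH : (S : Subgroup G) ≤ H := fun x hx =>
    hH x (IsPiElement.of_mem_subgroup (S.card_eq_multiplicity ▸ .prime_pow hq hqπ _) hx)
  exact fun hqH => S.not_dvd_index (hqH.trans (Subgroup.index_dvd_of_le hSH))

theorem commute_of_isPiElement_of_commutingBound_lt_card [Finite G] {m n : ℕ} (hm : 0 < m)
    (hG : ∀ S₁ S₂ : Finset G, #S₁ = m → #S₂ = n → (∀ x ∈ S₁, IsPiElement π x) →
      (∀ y ∈ S₂, IsPiElement π y) → ∃ x ∈ S₁, ∃ y ∈ S₂, Commute x y)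
    (Q : Subgroup G) (hQπ : IsPiNumber π (Nat.card Q)) (hQ : commutingBound m n < Nat.card Q)
    {x y : G} (hx : IsPiElement π x) (hy : IsPiElement π y) : Commute x y := by
  classical
  have := Fintype.ofFinite G
  let P : Finset G := {x | IsPiElement π x}
  have hP : ∀ x, x ∈ P ↔ IsPiElement π x := by simp [P]
  exact Finset.commute_of_commutingBound_lt_card (P := P)
    (fun x hx y hy hxy => (hP _).2 (((hP x).1 hx).mul ((hP y).1 hy) hxy))
    (fun g x hx => (hP _).2 (((hP x).1 hx).conj g)) hm
    (Finset.card_filter_forall_not_commute_lt fun S₁ hS₁ S₂ hS₂ h₁ h₂ =>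
      hG S₁ S₂ h₁ h₂ (fun x hx => (hP x).1 (hS₁ hx)) (fun y hy => (hP y).1 (hS₂ hy)))
    Q (fun x hx => (hP x).2 (IsPiElement.of_mem_subgroup hQπ hx)) hQ ((hP x).2 hx) ((hP y).2 hy)

end PiElements

theorem stmt19_general (m n : ℕ) (hm : 0 < m) :
    ∃ B : ℕ, ∀ (π : Set ℕ), (∀ q ∈ π, Nat.Prime q) →
      ∀ (G : Type) [Group G] [Finite G],
        (∀ S₁ S₂ : Finset G, S₁.card = m → S₂.card = n →
          (∀ x ∈ S₁, ∀ q : ℕ, q.Prime → q ∣ orderOf x → q ∈ π) →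
          (∀ y ∈ S₂, ∀ q : ℕ, q.Prime → q ∣ orderOf y → q ∈ π) →
          ∃ x ∈ S₁, ∃ y ∈ S₂, x * y = y * x) →
        (∃ d : ℕ, d ∣ Nat.card G ∧ (∀ q : ℕ, q.Prime → q ∣ d → q ∈ π) ∧ B < d) →
        ∃ H : Subgroup G, IsMulCommutative H ∧
          (∀ q : ℕ, q.Prime → q ∣ Nat.card H → q ∈ π) ∧
          (∀ q : ℕ, q.Prime → q ∣ H.index → q ∉ π) := by
  refine ⟨commutingBound m n ^ commutingBound m n, fun π _ G _ _ hG ⟨d, hdG, hdπ, hd⟩ => ?_⟩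
  obtain ⟨p, hpd, hpbig⟩ :=
    Nat.exists_mem_primeFactors_lt_ordProj (by unfold commutingBound; omega) hd
  have hp := Nat.prime_of_mem_primeFactors hpd
  have := Fact.mk hp
  obtain ⟨Q, hQ⟩ := Sylow.exists_subgroup_card_pow_prime p ((Nat.ordProj_dvd d p).trans hdG)
  have hQπ : IsPiNumber π (Nat.card Q) :=
    hQ ▸ .prime_pow hp (hdπ p hp (Nat.dvd_of_mem_primeFactors hpd)) _
  have hcomm : ∀ x y : G, IsPiElement π x → IsPiElement π y → Commute x y := fun _ _ =>
    commute_of_isPiElement_of_commutingBound_lt_card hm hG Q hQπ (hQ ▸ hpbig)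
  refine ⟨piElementsSubgroup π hcomm, ⟨⟨fun x y => Subtype.ext (hcomm _ _ x.2 y.2)⟩⟩,
    isPiNumber_natCard_of_forall_isPiElement fun x => ?_,
    fun q hq hqH hqπ => not_dvd_index_of_forall_isPiElement_mem (fun x hx => hx) hq hqπ hqH⟩
  rw [IsPiElement, ← Subgroup.orderOf_coe]
  exact x.2

/-- for all positive integers `m` and `n` there is a bound `B` such that
for every set of primes `π` and every finite group `G`: if `G ∈ C_π(m, n)` (i.e. for all
subsets `S₁, S₂` of the set of `π`-elements of `G` with `|S₁| = m`, `|S₂| = n` there are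
`x ∈ S₁`, `y ∈ S₂` with `xy = yx`) and the `π`-part of `|G|` exceeds `B` (i.e. some
divisor of `|G|` all of whose prime factors lie in `π` exceeds `B`), then `G` has an
abelian Hall `π`-subgroup. -/
theorem stmt19 (m n : ℕ) (hm : 0 < m) (hn : 0 < n) :
    ∃ B : ℕ, ∀ (π : Set ℕ), (∀ q ∈ π, Nat.Prime q) →
      ∀ (G : Type) [Group G] [Finite G],
        (∀ S₁ S₂ : Finset G, S₁.card = m → S₂.card = n →
          (∀ x ∈ S₁, ∀ q : ℕ, q.Prime → q ∣ orderOf x → q ∈ π) →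
          (∀ y ∈ S₂, ∀ q : ℕ, q.Prime → q ∣ orderOf y → q ∈ π) →
          ∃ x ∈ S₁, ∃ y ∈ S₂, x * y = y * x) →
        (∃ d : ℕ, d ∣ Nat.card G ∧ (∀ q : ℕ, q.Prime → q ∣ d → q ∈ π) ∧ B < d) →
        ∃ H : Subgroup G, IsMulCommutative H ∧
          (∀ q : ℕ, q.Prime → q ∣ Nat.card H → q ∈ π) ∧
          (∀ q : ℕ, q.Prime → q ∣ H.index → q ∉ π) :=
  stmt19_general m n hm
end
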